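/- For two partially entanglement-breaking channels with parameters p, q, the classical-trajectory entanglement-assisted capacity is C_{E,C}(p,q) = 2 + (1−p−q+2pq)·log₂(1−p−q+2pq) + (p+q−2pq)·log₂(p+q−2pq), and C_{E,C}(p,q) < 2 whenever p, q ∈ (0,1) with p + q − 2pq ∉ {0,1}. -/

import Mathlib

noncomputable def H (x : ℝ) : ℝ := -(x * Real.logb 2 x) - (1 - x) * Real.logb 2 (1 - x)

/-- General entanglement-assisted classical capacity over the classical trajectory
of two Pauli channels with error probabilities `(p0,p1,p2,p3)` and `(q0,q1,q2,q3)`. -/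
noncomputable def CEC (p0 p1 p2 p3 q0 q1 q2 q3 : ℝ) : ℝ :=
  2 + (p0*q0 + p1*q1 + p2*q2 + p3*q3) * Real.logb 2 (p0*q0 + p1*q1 + p2*q2 + p3*q3)
    + (p0*q1 + p1*q0 + p2*q3 + p3*q2) * Real.logb 2 (p0*q1 + p1*q0 + p2*q3 + p3*q2)
    + (p0*q2 + p2*q0 + p3*q1 + p1*q3) * Real.logb 2 (p0*q2 + p2*q0 + p3*q1 + p1*q3)
    + (p0*q3 + p3*q0 + p1*q2 + p2*q1) * Real.logb 2 (p0*q3 + p3*q0 + p1*q2 + p2*q1)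

/-- General entanglement-assisted classical capacity over the quantum trajectory
(quantum switch) of two Pauli channels. -/
noncomputable def CEQ (p0 p1 p2 p3 q0 q1 q2 q3 : ℝ) : ℝ :=
  2 + H ((p0*q0 + p1*q1 + p2*q2 + p3*q3) + (p0*q1 + p1*q0) + (p0*q2 + p2*q0) + (p0*q3 + p3*q0))
    + (p0*q0 + p1*q1 + p2*q2 + p3*q3) * Real.logb 2 (p0*q0 + p1*q1 + p2*q2 + p3*q3)
    + (p0*q1 + p1*q0) * Real.logb 2 (p0*q1 + p1*q0)
    + (p0*q2 + p2*q0) * Real.logb 2 (p0*q2 + p2*q0)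
    + (p0*q3 + p3*q0) * Real.logb 2 (p0*q3 + p3*q0)
    + (p2*q3 + p3*q2) * Real.logb 2 (p2*q3 + p3*q2)
    + (p3*q1 + p1*q3) * Real.logb 2 (p3*q1 + p1*q3)
    + (p1*q2 + p2*q1) * Real.logb 2 (p1*q2 + p2*q1)

/-! Only the weights `p₁, p₂, q₁, q₂` are nonzero, so `A₁ = A₂ = 0` and the capacity is `2` minus
the binary entropy (in bits) of `A₃ = p + q - 2pq`, the probability that exactly one of two
independent events of probabilities `p`, `q` occurs. For `p, q ∈ (0, 1)` this lies strictly inside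
`(0, 1)`, where the binary entropy is positive. -/

theorem CEC_partiallyEntanglementBreaking (p q : ℝ) :
    CEC 0 (1 - p) p 0 0 (1 - q) q 0
      = 2 + (1 - p - q + 2*p*q) * Real.logb 2 (1 - p - q + 2*p*q)
          + (p + q - 2*p*q) * Real.logb 2 (p + q - 2*p*q) := by
  have hA₀ : (0*0 + (1-p)*(1-q) + p*q + 0*0 : ℝ) = 1 - p - q + 2*p*q := by ring
  have hA₁ : (0*(1-q) + (1-p)*0 + p*0 + 0*q : ℝ) = 0 := by ring
  have hA₂ : (0*q + p*0 + 0*(1-q) + (1-p)*0 : ℝ) = 0 := by ring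
  have hA₃ : (0*0 + 0*0 + (1-p)*q + p*(1-q) : ℝ) = p + q - 2*p*q := by ring
  rw [CEC, hA₀, hA₁, hA₂, hA₃, zero_mul, add_zero, add_zero]

theorem mul_logb_add_mul_logb_one_sub_neg {b x : ℝ} (hb : 1 < b) (hx₀ : 0 < x) (hx₁ : x < 1) :
    x * Real.logb b x + (1 - x) * Real.logb b (1 - x) < 0 :=
  add_neg (mul_neg_of_pos_of_neg hx₀ (Real.logb_neg hb hx₀ hx₁))
    (mul_neg_of_pos_of_neg (by linarith) (Real.logb_neg hb (by linarith) (by linarith)))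

theorem mem_Ioo_add_sub_two_mul {p q : ℝ} (hp : p ∈ Set.Ioo 0 1) (hq : q ∈ Set.Ioo 0 1) :
    p + q - 2*p*q ∈ Set.Ioo 0 1 := by
  obtain ⟨hp₀, hp₁⟩ := hp
  obtain ⟨hq₀, hq₁⟩ := hq
  constructor <;> nlinarith [mul_pos hp₀ (sub_pos.2 hq₁), mul_pos hq₀ (sub_pos.2 hp₁),
    mul_pos hp₀ hq₀, mul_pos (sub_pos.2 hp₁) (sub_pos.2 hq₁)]

theorem stmt_10_general (p q : ℝ) (hp0 : 0 < p) (hp1 : p < 1) (hq0 : 0 < q) (hq1 : q < 1) :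
    CEC 0 (1 - p) p 0 0 (1 - q) q 0
      = 2 + (1 - p - q + 2*p*q) * Real.logb 2 (1 - p - q + 2*p*q)
          + (p + q - 2*p*q) * Real.logb 2 (p + q - 2*p*q)
    ∧ CEC 0 (1 - p) p 0 0 (1 - q) q 0 < 2 := by
  refine ⟨CEC_partiallyEntanglementBreaking p q, ?_⟩
  obtain ⟨hr₀, hr₁⟩ := mem_Ioo_add_sub_two_mul ⟨hp0, hp1⟩ ⟨hq0, hq1⟩
  have hentropy := mul_logb_add_mul_logb_one_sub_neg one_lt_two hr₀ hr₁
  rw [CEC_partiallyEntanglementBreaking, show 1 - p - q + 2*p*q = 1 - (p + q - 2*p*q) by ring]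
  linarith

theorem stmt_10 (p q : ℝ) (hp0 : 0 < p) (hp1 : p < 1) (hq0 : 0 < q) (hq1 : q < 1)
    (h0 : p + q - 2*p*q ≠ 0) (h1 : p + q - 2*p*q ≠ 1) :
    CEC 0 (1 - p) p 0 0 (1 - q) q 0
      = 2 + (1 - p - q + 2*p*q) * Real.logb 2 (1 - p - q + 2*p*q)
          + (p + q - 2*p*q) * Real.logb 2 (p + q - 2*p*q)
    ∧ CEC 0 (1 - p) p 0 0 (1 - q) q 0 < 2 :=
  stmt_10_general p q hp0 hp1 hq0 hq1
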